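/- arXiv:1607.03291 — 2 statements merged into one kernel-verified Lean document; each statement's English description precedes it below -/
import Mathlib

section
/- Let 𝓕 and 𝓕′ be two finite families of finite sets such that every element of 𝓕 can be expressed as the intersection of a nonempty subfamily of 𝓕′. Then 𝔣𝔯(𝓕) ≤ 𝔣𝔯(𝓕′). -/
open Cardinal

noncomputable section

/-- The underlying set of the ordinal `ω_n`, the least ordinal of cardinality `ℵ_n`,
realized as a type. -/
abbrev OmegaN (n : ℕ) : Type := ((Cardinal.aleph n).ord).ToType

/-- `n` is *free* for the family `𝓕` of finite sets: for every set mapping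
`S : [ω_n]^{<ω} → [ω_n]^{<ω}` there is a bijection `u` from `⋃ 𝓕` onto a subset
`Y = u '' (⋃ 𝓕)` of `ω_n` such that `S (u '' A) ∩ Y ⊆ u '' A` for all `A ∈ 𝓕`. -/
def IsFree {α : Type*} [DecidableEq α] (𝓕 : Finset (Finset α)) (n : ℕ) : Prop :=
  ∀ S : Finset (OmegaN n) → Finset (OmegaN n),
    ∃ u : α → OmegaN n, Set.InjOn u ↑(𝓕.sup id) ∧
      ∀ A ∈ 𝓕, S (A.image u) ∩ (𝓕.sup id).image u ⊆ A.image u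

/-- The index `𝔣𝔯 𝓕`: the least `n` which is free for `𝓕`. -/
noncomputable def fr {α : Type*} [DecidableEq α] (𝓕 : Finset (Finset α)) : ℕ :=
  sInf {n | IsFree 𝓕 n}

/-- Conditions (1)–(4) of a nested-orders family on `X`,
where a sequence `(t₁, …, t_k)` is represented by the list `[t₁, …, t_k]`. -/
def NestedBase {α : Type*} (X : Set α) (S : Set (List α)) : Prop :=
  (∀ l ∈ S, ∀ x ∈ l, x ∈ X) ∧
  (∀ t ∈ X, [t] ∈ S) ∧
  (∀ l ∈ S, l.Nodup) ∧
  (∀ (l : List α) (t : α), l ++ [t] ∈ S → l ∈ S) ∧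
  (∀ (l : List α) (s t : α), l ++ [s, t] ∈ S → l ++ [t] ∈ S) ∧
  (∀ (l : List α) (s t u : α), l ++ [s, t] ∈ S → l ++ [t, u] ∈ S → l ++ [s, u] ∈ S)

/-- A nested-orders family on `X`: conditions (1)–(5). -/
def IsNestedOrders {α : Type*} (X : Set α) (S : Set (List α)) : Prop :=
  NestedBase X S ∧
  ∀ (l : List α) (s t : α), l ++ [t] ∈ S → l ++ [s] ∈ S → t ≠ s →
    (l ++ [t, s] ∈ S ∨ l ++ [s, t] ∈ S)

/-- An `n`-nested-orders family on `X`: sequences of length at most `n+2`,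
conditions (1)–(4), and condition (5) for `k < n`. -/
def IsNNestedOrders {α : Type*} (n : ℕ) (X : Set α) (S : Set (List α)) : Prop :=
  NestedBase X S ∧
  (∀ l ∈ S, l.length ≤ n + 2) ∧
  ∀ (l : List α) (s t : α), l.length < n → l ++ [t] ∈ S → l ++ [s] ∈ S → t ≠ s →
    (l ++ [t, s] ∈ S ∨ l ++ [s, t] ∈ S)

/-- `A` satisfies the defining condition of membership in `𝓕_{𝔖,n}`: whenever
`(t₁, …, t_{n+2}) ∈ 𝔖` and `t₁, …, t_{n+1} ∈ A`, also `t_{n+2} ∈ A`. -/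
def MemFam {α : Type*} (n : ℕ) (S : Set (List α)) (A : Finset α) : Prop :=
  ∀ (l : List α) (t : α), l.length = n + 1 → l ++ [t] ∈ S →
    (∀ x ∈ l, x ∈ A) → t ∈ A

/-- The index `𝔫𝔬 𝓕`: the least `n` for which there is an `n`-nested-orders family `𝔖`
on `⋃ 𝓕` with `𝓕 ⊆ 𝓕_{𝔖,n}`. -/
noncomputable def no {α : Type*} [DecidableEq α] (𝓕 : Finset (Finset α)) : ℕ :=
  sInf {n | ∃ S : Set (List α),
    IsNNestedOrders n ↑(𝓕.sup id) S ∧ ∀ A ∈ 𝓕, MemFam n S A}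

/-! Monotonicity of freeness is immediate: to handle a set mapping `S` for `𝓕`, apply the
freeness of `𝓕'` to the set mapping `B ↦ ⋃_{A ⊆ B} S A`; since each member of `𝓕` is an
intersection of members of `𝓕'`, the injection obtained for `𝓕'` also works for `𝓕`.

The real content is that `𝔣𝔯 𝓕'` is attained (otherwise it would be the junk value
`sInf ∅ = 0`): `m = |⋃ 𝓕'|` is free for `𝓕'`, because for every set mapping on `ω_m` there is a
free set of size `m`. Take a chain `C₀ ⊆ C₁ ⊆ ⋯ ⊆ C_m` with `|C_k| = ℵ_k` and choose the points
top-down: the point taken from `C_{k+1}` avoids every `S F` with `F` a finite subset of `C_k`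
together with the points already chosen, and these sets cover only `ℵ_k < ℵ_{k+1}` points. -/

section FreeSet

variable {β : Type*}

/-- `D` is the reservoir from which the points still to be added to `P` will be drawn. -/
def IsFreeOver (S : Finset β → Finset β) (P : Finset β) (D : Set β) : Prop :=
  ∀ p ∈ P, ∀ F : Finset β, (F : Set β) ⊆ (↑P ∪ D) \ {p} → p ∉ S F

lemma isFreeOver_empty (S : Finset β → Finset β) (D : Set β) : IsFreeOver S ∅ D := by
  simp [IsFreeOver]

lemma IsFreeOver.insert [DecidableEq β] {S : Finset β → Finset β} {P : Finset β} {D D' : Set β}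
    {z : β} (hP : IsFreeOver S P D') (hDD' : D ⊆ D') (hz : z ∈ D')
    (hzS : ∀ F : Finset β, (F : Set β) ⊆ ↑P ∪ D → z ∉ S F) : IsFreeOver S (insert z P) D := by
  intro p hp F hF
  rcases Finset.mem_insert.mp hp with rfl | hpP
  · refine hzS F fun w hw => ?_
    obtain ⟨hw, hwp⟩ := hF hw
    rcases hw with hw | hw
    · exact Or.inl ((Finset.mem_insert.mp hw).resolve_left hwp)
    · exact Or.inr hw
  · refine hP p hpP F fun w hw => ?_
    obtain ⟨hw, hwp⟩ := hF hw
    refine ⟨?_, hwp⟩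
    rcases hw with hw | hw
    · rcases Finset.mem_insert.mp hw with rfl | hw
      exacts [Or.inr hz, Or.inl hw]
    · exact Or.inr (hDD' hw)

lemma IsFreeOver.image_inter_subset [DecidableEq β] {α : Type*} {S : Finset β → Finset β}
    {Y : Finset β} {D : Set β} (hY : IsFreeOver S Y D) {u : α → β} {X A : Finset α}
    (hAX : A ⊆ X) (hu : Set.MapsTo u X Y) : S (A.image u) ∩ X.image u ⊆ A.image u := by
  intro w hw
  obtain ⟨hwS, hwX⟩ := Finset.mem_inter.mp hw
  obtain ⟨x, hx, rfl⟩ := Finset.mem_image.mp hwX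
  by_contra hxA
  refine hY (u x) (hu hx) (A.image u) (fun v hv => ?_) hwS
  obtain ⟨a, ha, rfl⟩ := Finset.mem_image.mp hv
  exact ⟨Or.inl (hu (hAX ha)), fun hax => hxA (hax ▸ Finset.mem_image_of_mem u ha)⟩

lemma exists_mem_forall_notMem_setMap (S : Finset β → Finset β) (P : Finset β) {B C : Set β}
    (hC : ℵ₀ < #C) (hBC : #B < #C) :
    ∃ z ∈ C, z ∉ P ∧ ∀ F : Finset β, (F : Set β) ⊆ ↑P ∪ B → z ∉ S F := by
  classical
  set T : Set β := ↑P ∪ B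
  have hP : #(P : Set β) < #C := (Cardinal.lt_aleph0_of_finite _).trans hC
  have hT : #T < #C := (Cardinal.mk_union_le _ _).trans_lt (Cardinal.add_lt_of_lt hC.le hP hBC)
  have hFinsetT : #(Finset T) < #C := by
    rcases finite_or_infinite T with _ | _
    · exact (Cardinal.lt_aleph0_of_finite _).trans hC
    · rwa [Cardinal.mk_finset_of_infinite]
  set Bad : Set β := ↑P ∪ ⋃ F : Finset T, ↑(S (F.map (Function.Embedding.subtype _)))
  have hBad : #Bad < #C := by
    refine (Cardinal.mk_union_le _ _).trans_lt (Cardinal.add_lt_of_lt hC.le hP ?_)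
    refine (Cardinal.mk_iUnion_le _).trans_lt (Cardinal.mul_lt_of_lt hC.le hFinsetT ?_)
    exact (ciSup_le' fun F => (Cardinal.lt_aleph0_of_finite _).le).trans_lt hC
  obtain ⟨z, hzC, hzBad⟩ := Set.not_subset.mp fun h => (Cardinal.mk_le_mk_of_subset h).not_gt hBad
  refine ⟨z, hzC, fun hzP => hzBad (Or.inl hzP), fun F hF hzF => hzBad (Or.inr ?_)⟩
  refine Set.mem_iUnion.mpr ⟨F.subtype (· ∈ T), ?_⟩
  rwa [Finset.subtype_map_of_mem fun x hx => hF hx]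

theorem exists_isFreeOver_card_eq (S : Finset β → Finset β) {C : ℕ → Set β} (hmono : Monotone C)
    (k : ℕ) (hC : ∀ j < k, ℵ₀ < #(C (j + 1))) (hlt : ∀ j < k, #(C j) < #(C (j + 1)))
    (P : Finset β) (hP : IsFreeOver S P (C k)) :
    ∃ Y : Finset β, Y.card = P.card + k ∧ IsFreeOver S Y (C 0) := by
  classical
  induction k generalizing P with
  | zero => exact ⟨P, rfl, hP⟩
  | succ k ih =>
    obtain ⟨z, hzC, hzP, hzS⟩ :=
      exists_mem_forall_notMem_setMap S P (hC k k.lt_succ_self) (hlt k k.lt_succ_self)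
    obtain ⟨Y, hYcard, hY⟩ := ih (fun j hj => hC j (hj.trans k.lt_succ_self))
      (fun j hj => hlt j (hj.trans k.lt_succ_self)) (insert z P)
      (hP.insert (hmono k.le_succ) hzC hzS)
    exact ⟨Y, by rw [hYcard, Finset.card_insert_of_notMem hzP]; ring, hY⟩

theorem exists_monotone_mk_eq_aleph {m : ℕ} (hβ : ℵ_ m ≤ #β) :
    ∃ C : ℕ → Set β, Monotone C ∧ ∀ i ≤ m, #(C i) = ℵ_ i := by
  have hmin (i : ℕ) : ℵ_ (min i m : ℕ) ≤ #β :=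
    (Cardinal.aleph_le_aleph.mpr (by exact_mod_cast min_le_right i m)).trans hβ
  choose t ht using fun i => Cardinal.le_mk_iff_exists_set.mp (hmin i)
  refine ⟨fun i => ⋃ j ∈ Set.Iic i, t j,
    fun i i' h => Set.biUnion_subset_biUnion_left (Set.Iic_subset_Iic.mpr h), fun i hi => ?_⟩
  apply le_antisymm
  · have hunion := Cardinal.mk_biUnion_le_lift t (Set.Iic i)
    simp only [Cardinal.lift_uzero] at hunion
    calc _ ≤ _ := hunion
      _ ≤ ℵ₀ * ℵ_ i := by
          refine mul_le_mul' (Cardinal.lift_le_aleph0.mpr (Set.finite_Iic i).lt_aleph0.le)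
            (ciSup_le' fun j => ?_)
          rw [ht, Cardinal.aleph_le_aleph]
          exact_mod_cast (min_le_left _ _).trans j.2
      _ = ℵ_ i := Cardinal.aleph0_mul_aleph _
  · calc ℵ_ i = #(t i) := by rw [ht, min_eq_left hi]
      _ ≤ _ := Cardinal.mk_le_mk_of_subset (Set.subset_biUnion_of_mem Set.self_mem_Iic)

end FreeSet

lemma mk_omegaN (n : ℕ) : #(OmegaN n) = ℵ_ n := by
  rw [Cardinal.mk_toType, Cardinal.card_ord]

instance (n : ℕ) : Nonempty (OmegaN n) := by
  rw [← Cardinal.mk_ne_zero_iff, mk_omegaN]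
  exact (Cardinal.aleph_pos _).ne'

theorem exists_isFreeOver_card_eq_omegaN (m : ℕ) (S : Finset (OmegaN m) → Finset (OmegaN m)) :
    ∃ (Y : Finset (OmegaN m)) (D : Set (OmegaN m)), Y.card = m ∧ IsFreeOver S Y D := by
  obtain ⟨C, hmono, hC⟩ := exists_monotone_mk_eq_aleph (mk_omegaN m).ge
  have hsucc (j : ℕ) (hj : j < m) : #(C (j + 1)) = ℵ_ (j + 1 : ℕ) := hC (j + 1) hj
  obtain ⟨Y, hY, hfree⟩ := exists_isFreeOver_card_eq S hmono m
    (fun j hj => hsucc j hj ▸ Cardinal.aleph0_lt_aleph.mpr (by exact_mod_cast j.succ_pos))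
    (fun j hj => by
      rw [hsucc j hj, hC j hj.le, Cardinal.aleph_lt_aleph]
      exact_mod_cast j.lt_succ_self)
    ∅ (isFreeOver_empty S _)
  exact ⟨Y, C 0, by simpa using hY, hfree⟩

theorem isFree_card_sup {α : Type*} [DecidableEq α] (𝓕 : Finset (Finset α)) :
    IsFree 𝓕 (𝓕.sup id).card := by
  intro S
  obtain ⟨Y, D, hYcard, hY⟩ := exists_isFreeOver_card_eq_omegaN _ S
  obtain ⟨u, hmaps, hinj⟩ := (𝓕.sup id).finite_toSet.exists_injOn_of_encard_le
    (t := (Y : Set (OmegaN (𝓕.sup id).card))) (by simp [hYcard])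
  exact ⟨u, hinj, fun A hA =>
    hY.image_inter_subset (Finset.le_sup (f := id) hA) hmaps⟩

theorem IsFree.of_forall_eq_inf' {α : Type*} [DecidableEq α] {𝓕 𝓕' : Finset (Finset α)}
    (h : ∀ A ∈ 𝓕, ∃ G : Finset (Finset α), G ⊆ 𝓕' ∧ ∃ hG : G.Nonempty, A = G.inf' hG id)
    {n : ℕ} (hfree : IsFree 𝓕' n) : IsFree 𝓕 n := by
  intro S
  obtain ⟨u, hinj, hu⟩ := hfree fun B => B.powerset.sup S
  have hsup : 𝓕.sup id ⊆ 𝓕'.sup id := Finset.sup_le fun A hA => by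
    obtain ⟨G, hG𝓕', ⟨B, hB⟩, rfl⟩ := h A hA
    exact (Finset.inf'_le id hB).trans (Finset.le_sup (f := id) (hG𝓕' hB))
  refine ⟨u, hinj.mono (Finset.coe_subset.mpr hsup), fun A hA w hw => ?_⟩
  obtain ⟨hwS, hwX⟩ := Finset.mem_inter.mp hw
  obtain ⟨x, hx, rfl⟩ := Finset.mem_image.mp hwX
  obtain ⟨G, hG𝓕', hG, rfl⟩ := h A hA
  refine Finset.mem_image_of_mem u ((Finset.mem_inf' hG).mpr fun B hB => ?_)
  have hAB : (G.inf' hG id).image u ∈ (B.image u).powerset :=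
    Finset.mem_powerset.mpr (Finset.image_subset_image (Finset.inf'_le id hB))
  have hxB : u x ∈ B.image u := hu B (hG𝓕' hB)
    (Finset.mem_inter.mpr ⟨Finset.le_sup (f := S) hAB hwS, Finset.mem_image_of_mem u (hsup hx)⟩)
  obtain ⟨b, hb, hbx⟩ := Finset.mem_image.mp hxB
  rwa [← hinj (Finset.le_sup (f := id) (hG𝓕' hB) hb) (hsup hx) hbx]

/-- If every member of `𝓕` is an intersection of a nonempty subfamily of `𝓕'`,
then `𝔣𝔯 𝓕 ≤ 𝔣𝔯 𝓕'`. -/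
theorem statement4 {α : Type*} [DecidableEq α] (𝓕 𝓕' : Finset (Finset α))
    (h : ∀ A ∈ 𝓕, ∃ G : Finset (Finset α), G ⊆ 𝓕' ∧ ∃ hG : G.Nonempty, A = G.inf' hG id) :
    fr 𝓕 ≤ fr 𝓕' := by
  have hfree : IsFree 𝓕' (fr 𝓕') := Nat.sInf_mem (s := {n | IsFree 𝓕' n}) ⟨_, isFree_card_sup 𝓕'⟩
  exact Nat.sInf_le (hfree.of_forall_eq_inf' h)

end
end

section
/- Let X be a finite nonempty set and let <₁, <₂, …, <_{n+1} be n+1 linear order relations on X. Let 𝓕 be the family of all subsets A ⊆ X for which there exist s₁, …, s_{n+1} ∈ X with A = {t ∈ X : t ≤₁ s₁, t ≤₂ s₂, …, t ≤_{n+1} s_{n+1}}. Then 𝔣𝔯(𝓕) ≤ n. -/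
open Cardinal

noncomputable section

/-!
Inside `ω_n` one builds `n` increasing `ω`-chains `K₀, …, K_{n-1}` of `S`-closed sets whose
grid cells `⋂ i, K i (f i + 1) \ K i (f i)` are all infinite: the last chain consists of closed
sets of size `ℵ_{n-1}` each of which adds `ℵ_{n-1}` new points, and the remaining chains are
built recursively inside these increments. A point `p` is sent into the cell indexed by its
ranks in the first `n` orders, greedily along the last order, so that `u p` also avoids
`S (u '' A)` for every `A ∈ 𝓕` lying below `p` in that order. If `p ∉ A ∈ 𝓕`, then `A` lies
strictly below `p` in some order. For one of the first `n` orders, `u '' A` lies in the closed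
set `K i (rank p)`, which misses `u p`; for the last order the greedy choice applies.
-/

open Set

universe u v

lemma Cardinal.mk_iUnion_le_of_le {Ω : Type u} {ι : Type v} {f : ι → Set Ω} {c : Cardinal.{u}}
    (hc : ℵ₀ ≤ c) (hι : lift.{u} #ι ≤ lift.{v} c) (hf : ∀ i, #(f i) ≤ c) :
    #(⋃ i, f i) ≤ c := by
  rw [← lift_le.{v}]
  refine (mk_iUnion_le_lift f).trans ?_
  rw [← mul_eq_self (aleph0_le_lift.2 hc)]
  exact mul_le_mul' hι (ciSup_le' fun i => lift_le.2 (hf i))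

lemma Cardinal.mk_finset_subset_le {Ω : Type u} {B : Set Ω} {c : Cardinal.{u}} (hc : ℵ₀ ≤ c)
    (hB : #B ≤ c) : #{F : Finset Ω // ↑F ⊆ B} ≤ c := by
  change #{F : Finset Ω // ∀ a ∈ F, a ∈ B} ≤ c
  rw [← mk_congr (Equiv.finsetSubtypeComm (· ∈ B))]
  rcases finite_or_infinite B with hfin | hinf
  · exact (lt_aleph0_of_finite _).le.trans hc
  · rwa [mk_finset_of_infinite]

section SetMapping

variable {Ω : Type u} (S : Finset Ω → Finset Ω)

def IsClosedUnder (B : Set Ω) : Prop :=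
  ∀ F : Finset Ω, ↑F ⊆ B → ↑(S F) ⊆ B

def closureStep (B : Set Ω) : Set Ω :=
  B ∪ ⋃ F : {F : Finset Ω // ↑F ⊆ B}, ↑(S F.1)

variable {S} {c : Cardinal.{u}}

lemma mk_closureStep_le {B : Set Ω} (hc : ℵ₀ ≤ c) (hB : #B ≤ c) : #(closureStep S B) ≤ c :=
  (mk_union_le _ _).trans <| add_le_of_le hc hB <|
    mk_iUnion_le_of_le hc (by simpa using mk_finset_subset_le hc hB)
      fun _ => (lt_aleph0_of_finite _).le.trans hc

lemma exists_isClosedUnder_superset {B : Set Ω} (hc : ℵ₀ ≤ c) (hB : #B ≤ c) :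
    ∃ B', B ⊆ B' ∧ IsClosedUnder S B' ∧ #B' ≤ c := by
  set C : ℕ → Set Ω := fun k => (closureStep S)^[k] B
  have hC : ∀ k, C (k + 1) = closureStep S (C k) := fun k => Function.iterate_succ_apply' _ _ _
  have hmono : Monotone C := monotone_nat_of_le_succ fun k => (hC k).symm ▸ subset_union_left
  have hsize : ∀ k, #(C k) ≤ c := by
    intro k
    induction k with
    | zero => exact hB
    | succ k ih => rw [hC]; exact mk_closureStep_le hc ih
  refine ⟨⋃ k, C k, subset_iUnion C 0, fun F hF => ?_,
    mk_iUnion_le_of_le hc (by simpa using hc) hsize⟩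
  obtain ⟨k, hk⟩ := hmono.directed_le.exists_mem_subset_of_finset_subset_biUnion hF
  refine Subset.trans ?_ (subset_iUnion C (k + 1))
  rw [hC]
  exact subset_union_right.trans' (subset_iUnion_of_subset ⟨F, hk⟩ subset_rfl)

lemma exists_isClosedUnder_extension {ι : Type v} [Countable ι] (hc : ℵ₀ ≤ c)
    (T : ι → Set Ω) (hT : ∀ l, c < #(T l)) {B : Set Ω} (hB : #B ≤ c) :
    ∃ B', B ⊆ B' ∧ IsClosedUnder S B' ∧ #B' ≤ c ∧ ∀ l, c ≤ #((B' \ B) ∩ T l : Set Ω) := by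
  have hdiff : ∀ l, c ≤ #(T l \ B : Set Ω) := fun l => by
    by_contra! h
    exact (hT l).not_ge ((le_mk_sdiff_add_mk _ _).trans (add_le_of_le hc h.le hB))
  choose U hUT hU using fun l => le_mk_iff_exists_subset.1 (hdiff l)
  have hUsize : #(⋃ l, U l) ≤ c :=
    mk_iUnion_le_of_le hc ((lift_le_aleph0.2 mk_le_aleph0).trans (aleph0_le_lift.2 hc))
      fun l => (hU l).le
  obtain ⟨B', hsub, hcl, hsize⟩ :=
    exists_isClosedUnder_superset (S := S) hc ((mk_union_le _ _).trans (add_le_of_le hc hB hUsize))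
  refine ⟨B', subset_union_left.trans hsub, hcl, hsize, fun l => (hU l).ge.trans ?_⟩
  refine mk_le_mk_of_subset fun x hx => ⟨⟨?_, (hUT l hx).2⟩, (hUT l hx).1⟩
  exact hsub (Or.inr (mem_iUnion_of_mem l hx))

lemma exists_isClosedUnder_chain {ι : Type v} [Countable ι] (hc : ℵ₀ ≤ c)
    (T : ι → Set Ω) (hT : ∀ l, c < #(T l)) :
    ∃ C : ℕ → Set Ω, Monotone C ∧ (∀ j, IsClosedUnder S (C j)) ∧
      ∀ j l, c ≤ #((C (j + 1) \ C j) ∩ T l : Set Ω) := by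
  choose next hsub hcl hsize hfresh using
    fun B : {B : Set Ω // #B ≤ c} => exists_isClosedUnder_extension (S := S) hc T hT B.2
  let D : ℕ → {B : Set Ω // #B ≤ c} := fun j => (fun B => ⟨next B, hsize B⟩)^[j] ⟨∅, by simp⟩
  have hD : ∀ j, (D (j + 1)).1 = next (D j) := fun j => by
    simp only [D, Function.iterate_succ_apply']
  refine ⟨fun j => next (D j), monotone_nat_of_le_succ fun j => ?_, fun j => hcl _,
    fun j l => ?_⟩
  · exact (hD j).symm ▸ hsub (D (j + 1))
  · simpa only [hD] using hfresh (D (j + 1)) l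

def gridCell {k : ℕ} (K : Fin k → ℕ → Set Ω) (f : Fin k → ℕ) : Set Ω :=
  ⋂ i, K i (f i + 1) \ K i (f i)

theorem exists_isClosedUnder_grid (k : ℕ) {ι : Type v} [Countable ι] (T : ι → Set Ω)
    (hT : ∀ l, ℵ_ k ≤ #(T l)) :
    ∃ K : Fin k → ℕ → Set Ω, (∀ i, Monotone (K i)) ∧ (∀ i j, IsClosedUnder S (K i j)) ∧
      ∀ f l, (gridCell K f ∩ T l).Infinite := by
  induction k generalizing ι with
  | zero =>
    refine ⟨Fin.elim0, fun i => i.elim0, fun i => i.elim0, fun f l => ?_⟩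
    simpa [gridCell, ← infinite_coe_iff, ← aleph0_le_mk_iff] using hT l
  | succ k ih =>
    have hc : ℵ₀ ≤ ℵ_ k := aleph0_le_aleph k
    obtain ⟨C, hCmono, hCcl, hCfresh⟩ := exists_isClosedUnder_chain (S := S) hc T
      fun l => (aleph_lt_aleph.2 (by simp)).trans_le (hT l)
    obtain ⟨K, hKmono, hKcl, hKcell⟩ :=
      ih (fun jl : ℕ × ι => (C (jl.1 + 1) \ C jl.1) ∩ T jl.2) fun jl => hCfresh jl.1 jl.2
    refine ⟨Fin.snoc K C, Fin.lastCases (by simpa using hCmono) (by simpa using hKmono),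
      Fin.lastCases (by simpa using hCcl) (by simpa using hKcl), fun f l => ?_⟩
    refine (hKcell (fun i => f i.castSucc) (f (Fin.last k), l)).mono ?_
    rintro x ⟨hxK, ⟨hxC, hxT⟩⟩
    refine ⟨mem_iInter.2 (Fin.lastCases ?_ fun i => ?_), hxT⟩
    · simpa using hxC
    · simpa using mem_iInter.1 hxK i

lemma notMem_image_of_forall_lt {α : Type*} [DecidableEq Ω] {K : ℕ → Set Ω} (hK : Monotone K)
    (hcl : ∀ j, IsClosedUnder S (K j)) {rank : α → ℕ} {u : α → Ω} {A : Finset α} {p : α}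
    (hA : ∀ a ∈ A, u a ∈ K (rank a + 1) ∧ rank a < rank p) (hp : u p ∉ K (rank p)) :
    u p ∉ S (A.image u) := by
  refine fun h => hp (hcl _ _ (fun y hy => ?_) h)
  obtain ⟨a, ha, rfl⟩ := Finset.mem_image.1 hy
  exact hK (hA a ha).2 (hA a ha).1

end SetMapping

section Greedy

variable {α Ω : Type*} [LinearOrder α] [Fintype α]

theorem exists_forall_mem_notMem (cell : α → Set Ω) (hcell : ∀ p, (cell p).Infinite)
    (bad : α → (α → Ω) → Finset Ω) (hbad : ∀ p u v, (∀ q < p, u q = v q) → bad p u = bad p v) :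
    ∃ u : α → Ω, ∀ p, u p ∈ cell p ∧ u p ∉ bad p u := by
  classical
  suffices ∀ s : Finset α, ∃ u : α → Ω, ∀ p ∈ s, u p ∈ cell p ∧ u p ∉ bad p u by
    simpa using this Finset.univ
  intro s
  induction s using Finset.induction_on_max with
  | empty => exact ⟨fun p => (hcell p).nonempty.some, by simp⟩
  | insert a s hlt ih =>
    obtain ⟨u, hu⟩ := ih
    obtain ⟨x, hxcell, hxbad⟩ := ((hcell a).sdiff (bad a u).finite_toSet).nonempty
    have hbelow : ∀ q < a, Function.update u a x q = u q := fun q hq =>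
      Function.update_of_ne hq.ne _ _
    refine ⟨Function.update u a x, fun p hp => ?_⟩
    rcases Finset.mem_insert.1 hp with rfl | hps
    · rw [hbad p _ u hbelow, Function.update_self]
      exact ⟨hxcell, hxbad⟩
    · rw [hbad p _ u fun q hq => hbelow q (hq.trans (hlt p hps)), hbelow p (hlt p hps)]
      exact hu p hps

theorem exists_injective_forall_mem_notMem [DecidableEq Ω] (cell : α → Set Ω)
    (hcell : ∀ p, (cell p).Infinite) (bad : α → (α → Ω) → Finset Ω)
    (hbad : ∀ p u v, (∀ q < p, u q = v q) → bad p u = bad p v) :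
    ∃ u : α → Ω, Function.Injective u ∧ ∀ p, u p ∈ cell p ∧ u p ∉ bad p u := by
  obtain ⟨u, hu⟩ := exists_forall_mem_notMem cell hcell
    (fun p u => bad p u ∪ {q | q < p}.toFinset.image u) fun p u v h => by
      rw [hbad p u v h, Finset.image_congr fun q hq => h q (by simpa using hq)]
  have hlow : ∀ p q, q < p → u q ≠ u p := fun p q hqp huq =>
    (hu p).2 (Finset.mem_union_right _ (Finset.mem_image.2 ⟨q, by simpa using hqp, huq⟩))
  refine ⟨u, fun p q hpq => ?_, fun p => ⟨(hu p).1, fun h => (hu p).2 (Finset.mem_union_left _ h)⟩⟩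
  by_contra hne
  rcases lt_or_gt_of_ne hne with h | h
  · exact hlow q p h hpq
  · exact hlow p q h hpq.symm

lemma exists_strictMono_nat : ∃ f : α → ℕ, StrictMono f :=
  ⟨fun a => (monoEquivOfFin α rfl).symm a, Fin.val_strictMono.comp (OrderIso.strictMono _)⟩

end Greedy

lemma exists_forall_lt_of_notMem {α ι : Type*} (r : ι → LinearOrder α) {A : Finset α}
    {s : ι → α} (hA : ∀ t, t ∈ A ↔ ∀ i, (r i).le t (s i)) {p : α} (hp : p ∉ A) :
    ∃ i, ∀ a ∈ A, (r i).lt a p := by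
  obtain ⟨i, hi⟩ : ∃ i, ¬ (r i).le p (s i) := by simpa [hA] using hp
  let := r i
  exact ⟨i, fun a ha => lt_of_le_of_lt ((hA a).1 ha i) (not_le.1 hi)⟩

theorem statement14_general {α : Type*} [Fintype α] [DecidableEq α] (n : ℕ)
    (r : Fin (n + 1) → LinearOrder α) (𝓕 : Finset (Finset α))
    (h𝓕 : ∀ A : Finset α, A ∈ 𝓕 ↔
      ∃ s : Fin (n + 1) → α, ∀ t : α, (t ∈ A ↔ ∀ i, (r i).le t (s i))) :
    fr 𝓕 ≤ n := by
  refine Nat.sInf_le fun S => ?_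
  obtain ⟨K, hKmono, hKcl, hKcell⟩ :=
    exists_isClosedUnder_grid (S := S) n (fun _ : Unit => univ) fun _ => by simp
  choose rank hrank using fun i => letI := r i; exists_strictMono_nat (α := α)
  let cell : α → Set (OmegaN n) := fun p => gridCell K fun i => rank i.castSucc p
  let := r (Fin.last n)
  obtain ⟨u, hinj, hu⟩ := exists_injective_forall_mem_notMem cell
    (fun p => by simpa using hKcell (fun i => rank i.castSucc p) ())
    (fun p u => (𝓕.filter fun A => ∀ a ∈ A, a < p).sup fun A => S (A.image u))
    fun p u v h => Finset.sup_congr rfl fun A hA =>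
      congrArg S (Finset.image_congr fun a ha => h a ((Finset.mem_filter.1 hA).2 a ha))
  refine ⟨u, hinj.injOn, fun A hA x hx => ?_⟩
  obtain ⟨hxS, p, -, rfl⟩ : x ∈ S (A.image u) ∧ ∃ p ∈ 𝓕.sup id, u p = x := by
    simpa using Finset.mem_inter.1 hx
  by_contra hpA
  obtain ⟨s, hs⟩ := (h𝓕 A).1 hA
  obtain ⟨i, hi⟩ := exists_forall_lt_of_notMem r hs fun h => hpA (Finset.mem_image_of_mem u h)
  induction i using Fin.lastCases with
  | last => exact (hu p).2 (Finset.mem_sup.2 ⟨A, Finset.mem_filter.2 ⟨hA, hi⟩, hxS⟩)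
  | cast j =>
    have hcell : ∀ q, u q ∈ K j (rank j.castSucc q + 1) \ K j (rank j.castSucc q) :=
      fun q => mem_iInter.1 (hu q).1 j
    exact notMem_image_of_forall_lt (hKmono j) (hKcl j)
      (fun a ha => ⟨(hcell a).1, hrank j.castSucc (hi a ha)⟩) (hcell p).2 hxS

/-- Intersections of initial segments of `n+1` linear orders on a finite nonempty set:
if `𝓕` is the family of all sets of the form `{t : t ≤₁ s₁, …, t ≤_{n+1} s_{n+1}}`,
then `𝔣𝔯 𝓕 ≤ n`. -/
theorem statement14 {α : Type*} [Fintype α] [Nonempty α] [DecidableEq α] (n : ℕ)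
    (r : Fin (n + 1) → LinearOrder α) (𝓕 : Finset (Finset α))
    (h𝓕 : ∀ A : Finset α, A ∈ 𝓕 ↔
      ∃ s : Fin (n + 1) → α, ∀ t : α, (t ∈ A ↔ ∀ i, (r i).le t (s i))) :
    fr 𝓕 ≤ n :=
  statement14_general n r 𝓕 h𝓕

end
end
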